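/- arXiv:2301.11437 — 8 statements merged into one kernel-verified Lean document; each statement's English description precedes it below -/
import Mathlib

section
/- Let E and F be elliptic curves over K_P whose Weierstrass coefficients lie in R_P. Assume E and F are equivalent, i.e., F is obtained from E by a variable change (u,l,m,n) with u,l,m,n ∈ K_P and u ≠ 0, and assume v_P(Δ(E)) = v_P(Δ(F)). Then there exist u',l',m',n' ∈ R_P with v_P(u') = 0 such that F is obtained from E by the variable change (u',l',m',n'). -/
/-!
The discriminants change by `Δ(E) = u¹² Δ(F)`, so equal valuations force `u¹²`, hence `u` and
`u⁻¹`, to be integral. With `u` integral, each coefficient formula of the variable change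
exhibits a quantity in `r, s, t` as integral: `4r` and `3r` are roots of monic polynomials
coming from `b₆` and `b₈`, hence so is `r = 4r - 3r`; then `s² + a₁s` and `t² + (a₃ + ra₁)t`
are integral by the formulas for `a₂` and `a₆`. A DVR is integrally closed, so all of
`u, u⁻¹, r, s, t` lie in `R`.
-/

open WeierstrassCurve

section RootsOfMonicPolynomials

open Polynomial

variable {R A : Type*} [CommRing R] [CommRing A] [Algebra R A] {x : A}

theorem IsIntegral.of_sq_add_mul {c : A} (hc : _root_.IsIntegral R c)
    (h : _root_.IsIntegral R (x ^ 2 + c * x)) : _root_.IsIntegral R x := by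
  nontriviality A
  let S := integralClosure R A
  have hmonic : (X ^ 2 + C (⟨c, hc⟩ : S) * X).Monic := by monicity!
  have hdeg : (X ^ 2 + C (⟨c, hc⟩ : S) * X).natDegree = 2 := by compute_degree!
  refine isIntegral_trans (A := S) x (IsIntegral.of_aeval_monic hmonic (by omega) ?_)
  simpa using h.tower_top

theorem IsIntegral.of_pow_three_add (a b : R)
    (h : _root_.IsIntegral R (x ^ 3 + algebraMap R A a * x ^ 2 + algebraMap R A b * x)) :
    _root_.IsIntegral R x := by
  nontriviality R
  have hmonic : (X ^ 3 + C a * X ^ 2 + C b * X).Monic := by monicity!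
  have hdeg : (X ^ 3 + C a * X ^ 2 + C b * X).natDegree = 3 := by compute_degree!
  exact IsIntegral.of_aeval_monic hmonic (by omega) (by simpa using h)

theorem IsIntegral.of_pow_four_add (a b c : R)
    (h : _root_.IsIntegral R
      (x ^ 4 + algebraMap R A a * x ^ 3 + algebraMap R A b * x ^ 2 + algebraMap R A c * x)) :
    _root_.IsIntegral R x := by
  nontriviality R
  have hmonic : (X ^ 4 + C a * X ^ 3 + C b * X ^ 2 + C c * X).Monic := by monicity!
  have hdeg : (X ^ 4 + C a * X ^ 3 + C b * X ^ 2 + C c * X).natDegree = 4 := by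
    compute_degree!
  exact IsIntegral.of_aeval_monic hmonic (by omega) (by simpa using h)

end RootsOfMonicPolynomials

namespace WeierstrassCurve.VariableChange

variable {R A : Type*} [CommRing R] [CommRing A] [Algebra R A] {W W' : WeierstrassCurve R}
  {C : VariableChange A}

lemma isIntegral_of_inv_pow_mul_eq (hu : _root_.IsIntegral R (C.u : A)) {x : A} {y : R} {n : ℕ}
    (h : (C.u⁻¹ : Aˣ) ^ n * x = algebraMap R A y) : _root_.IsIntegral R x := by
  have : x = C.u ^ n * algebraMap R A y := by
    rw [← h, ← mul_assoc, ← mul_pow, Units.mul_inv, one_pow, one_mul]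
  exact this ▸ (hu.pow n).mul isIntegral_algebraMap

lemma isIntegral_r (h : C • W.map (algebraMap R A) = W'.map (algebraMap R A))
    (hu : _root_.IsIntegral R (C.u : A)) : _root_.IsIntegral R C.r := by
  have hb₆ := congrArg b₆ h
  have hb₈ := congrArg b₈ h
  simp only [variableChange_b₆, variableChange_b₈, map_b₂, map_b₄, map_b₆, map_b₈] at hb₆ hb₈
  replace hb₆ := isIntegral_of_inv_pow_mul_eq hu hb₆
  replace hb₈ := isIntegral_of_inv_pow_mul_eq hu hb₈
  have h₄ : _root_.IsIntegral R (4 * C.r) := .of_pow_three_add W.b₂ (8 * W.b₄) <| by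
    convert ((isIntegral_natCast 16).mul hb₆).sub (isIntegral_algebraMap (x := 16 * W.b₆))
      using 1
    simp only [map_mul, map_ofNat]
    ring
  have h₃ : _root_.IsIntegral R (3 * C.r) :=
    .of_pow_four_add W.b₂ (9 * W.b₄) (27 * W.b₆) <| by
      convert ((isIntegral_natCast 27).mul hb₈).sub (isIntegral_algebraMap (x := 27 * W.b₈))
        using 1
      simp only [map_mul, map_ofNat]
      ring
  convert h₄.sub h₃ using 1
  ring

lemma isIntegral_s (h : C • W.map (algebraMap R A) = W'.map (algebraMap R A))
    (hu : _root_.IsIntegral R (C.u : A)) : _root_.IsIntegral R C.s := by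
  have ha₂ := congrArg a₂ h
  simp only [variableChange_a₂, map_a₁, map_a₂] at ha₂
  refine .of_sq_add_mul (c := algebraMap R A W.a₁) isIntegral_algebraMap ?_
  convert ((isIntegral_algebraMap (x := W.a₂)).add
    ((isIntegral_natCast 3).mul (isIntegral_r h hu))).sub
    (isIntegral_of_inv_pow_mul_eq hu ha₂) using 1
  ring

lemma isIntegral_t (h : C • W.map (algebraMap R A) = W'.map (algebraMap R A))
    (hu : _root_.IsIntegral R (C.u : A)) : _root_.IsIntegral R C.t := by
  have ha₆ := congrArg a₆ h
  simp only [variableChange_a₆, map_a₁, map_a₂, map_a₃, map_a₄, map_a₆] at ha₆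
  have hr := isIntegral_r h hu
  refine .of_sq_add_mul (c := algebraMap R A W.a₃ + C.r * algebraMap R A W.a₁)
    (isIntegral_algebraMap.add (hr.mul isIntegral_algebraMap)) ?_
  convert ((isIntegral_algebraMap (x := W.a₆)).add (hr.mul (isIntegral_algebraMap (x := W.a₄)))
    |>.add ((hr.pow 2).mul (isIntegral_algebraMap (x := W.a₂))) |>.add (hr.pow 3)).sub
    (isIntegral_of_inv_pow_mul_eq hu ha₆) using 1
  ring

lemma isIntegral_u_of_associated_Δ {K : Type*} [CommRing K] [IsDomain K] [Algebra R K]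
    [FaithfulSMul R K] {C : VariableChange K}
    (h : C • W.map (algebraMap R K) = W'.map (algebraMap R K)) (hΔ : W.Δ ≠ 0)
    (hassoc : Associated W.Δ W'.Δ) :
    _root_.IsIntegral R (C.u : K) ∧ _root_.IsIntegral R ((C.u⁻¹ : Kˣ) : K) := by
  obtain ⟨ε, hε⟩ := hassoc
  have hu : C.u⁻¹ ^ 12 = Units.map (algebraMap R K : R →* K) ε := by
    have := congrArg WeierstrassCurve.Δ h
    rw [variableChange_Δ, map_Δ, map_Δ, ← hε, map_mul, mul_comm (algebraMap R K W.Δ)] at this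
    ext
    have hΔK : algebraMap R K W.Δ ≠ 0 :=
      (map_ne_zero_iff _ (FaithfulSMul.algebraMap_injective R K)).mpr hΔ
    exact mul_right_cancel₀ hΔK this
  have hu' : C.u ^ 12 = Units.map (algebraMap R K : R →* K) ε⁻¹ := by
    rw [map_inv, ← hu, inv_pow, inv_inv]
  constructor <;> refine .of_pow (n := 12) (by norm_num) ?_ <;> rw [← Units.val_pow_eq_pow_val]
  · exact hu' ▸ isIntegral_algebraMap
  · exact hu ▸ isIntegral_algebraMap

lemma exists_map_eq_of_isIntegral {K : Type*} [CommRing K] [Algebra R K] [IsFractionRing R K]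
    [IsIntegrallyClosed R] {C : VariableChange K} (hu : _root_.IsIntegral R (C.u : K))
    (hu' : _root_.IsIntegral R ((C.u⁻¹ : Kˣ) : K)) (hr : _root_.IsIntegral R C.r)
    (hs : _root_.IsIntegral R C.s) (ht : _root_.IsIntegral R C.t) :
    ∃ C' : VariableChange R, C'.map (algebraMap R K) = C := by
  obtain ⟨u, hu⟩ := IsIntegrallyClosed.isIntegral_iff.mp hu
  obtain ⟨u', hu'⟩ := IsIntegrallyClosed.isIntegral_iff.mp hu'
  obtain ⟨r, hr⟩ := IsIntegrallyClosed.isIntegral_iff.mp hr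
  obtain ⟨s, hs⟩ := IsIntegrallyClosed.isIntegral_iff.mp hs
  obtain ⟨t, ht⟩ := IsIntegrallyClosed.isIntegral_iff.mp ht
  have huu' : u * u' = 1 := IsFractionRing.injective R K (by simp [hu, hu'])
  exact ⟨⟨⟨u, u', huu', mul_comm u u' ▸ huu'⟩, r, s, t⟩, by ext <;> simp [hu, hr, hs, ht]⟩

end WeierstrassCurve.VariableChange

theorem IsDiscreteValuationRing.dvd_of_forall_pow_dvd_imp {R : Type*} [CommRing R] [IsDomain R]
    [IsDiscreteValuationRing R] {π a b : R} (hπ : Irreducible π) (ha : a ≠ 0)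
    (h : ∀ j : ℕ, π ^ j ∣ a → π ^ j ∣ b) : a ∣ b := by
  obtain ⟨m, hm⟩ := associated_pow_irreducible ha hπ
  exact hm.dvd_iff_dvd_left.mpr (h m hm.symm.dvd)

/-- Let `E` and `F` be elliptic curves over `K_P` whose Weierstrass
coefficients lie in the valuation ring `R_P` (modelled as Weierstrass curves over the
complete discrete valuation ring `R` with fraction field `K_P = FractionRing R`).
If `E` and `F` are related by some admissible variable change `(u, l, m, n)` over `K_P`
(with `u ≠ 0`) and `v_P(Δ(E)) = v_P(Δ(F))` (expressed via divisibility by powers of the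
uniformizer `π`), then they are related by an admissible variable change whose datum
`(u', l', m', n')` has `u'` a unit of `R_P` (i.e. `v_P(u') = 0`) and `l', m', n' ∈ R_P`. -/
theorem stmt_0 {R : Type*} [CommRing R] [IsDomain R] [IsDiscreteValuationRing R]
    (π : R) (hπ : Irreducible π)
    (E F : WeierstrassCurve R) (hE : E.Δ ≠ 0) (hF : F.Δ ≠ 0)
    (hequiv : ∃ C : VariableChange (FractionRing R),
      C • (E.map (algebraMap R (FractionRing R)))
        = F.map (algebraMap R (FractionRing R)))
    (hval : ∀ j : ℕ, π ^ j ∣ E.Δ ↔ π ^ j ∣ F.Δ) :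
    ∃ C' : VariableChange R, C' • E = F := by
  obtain ⟨C, hC⟩ := hequiv
  have hassoc : Associated E.Δ F.Δ := associated_of_dvd_dvd
    (IsDiscreteValuationRing.dvd_of_forall_pow_dvd_imp hπ hE fun j => (hval j).mp)
    (IsDiscreteValuationRing.dvd_of_forall_pow_dvd_imp hπ hF fun j => (hval j).mpr)
  obtain ⟨hu, hu'⟩ := VariableChange.isIntegral_u_of_associated_Δ hC hE hassoc
  obtain ⟨C', rfl⟩ := VariableChange.exists_map_eq_of_isIntegral hu hu'
    (VariableChange.isIntegral_r hC hu) (VariableChange.isIntegral_s hC hu)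
    (VariableChange.isIntegral_t hC hu)
  rw [map_variableChange] at hC
  exact ⟨C', map_injective (IsFractionRing.injective R _) hC⟩
end

section
/- Assume p ≥ 5. Define φ : R_P^5 → R_P^2 by φ(a1,a2,a3,a4,a6) = (−b2²/48 + b4/2, −b2³/864 − b2·b4/24 + b6/4), where b2 = a1² + 4a2, b4 = a1a3 + 2a4, b6 = a3² + 4a6. Then for every open subset U of R_P^2, μ_P(φ^{-1}(U)) = μ_P(U), where the left-hand measure is the normalized Haar measure on K_P^5 and the right-hand one on K_P^2. -/
/-!
Since `2` and `4` are units, `φ x = (x 3 + f (x 0, x 1, x 2), x 4 + g (x 0, x 1, x 2, x 3))`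
for polynomials `f`, `g`. Adding to one coordinate a measurable function of the others
preserves a product measure whose factor at that coordinate is translation invariant (Fubini),
and forgetting coordinates pushes a product of probability measures forward to the product of
the remaining factors. So `φ` carries `ν⁵` to `ν²`, where `ν` is the Haar probability measure
of `R`; by uniqueness of Haar probability measures these are `μ₅` and `μ₂`. The powers of the
maximal ideal form a countable basis at `0`, which makes the compact ring `R` second countable,
so that Borel sets of `R^n` are measurable for the product σ-algebra.
-/

open MeasureTheory

theorem CharP.inverse_ofNat_mul_self_of_lt {R : Type*} [Ring R] {p : ℕ} [CharP R p]
    (hp : p.Prime) (n : ℕ) [n.AtLeastTwo] (hn : n < p) :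
    Ring.inverse (OfNat.ofNat n : R) * OfNat.ofNat n = 1 :=
  Ring.inverse_mul_cancel _ <| (CharP.isUnit_ofNat_iff hp).2 <|
    Nat.not_dvd_of_pos_of_lt (Nat.zero_lt_of_lt Nat.AtLeastTwo.one_lt) hn

theorem IsAdic.secondCountableTopology {R : Type*} [CommRing R] [TopologicalSpace R]
    [IsTopologicalRing R] [CompactSpace R] {I : Ideal R} (hI : IsAdic I) :
    SecondCountableTopology R := by
  let : UniformSpace R := IsTopologicalAddGroup.rightUniformSpace R
  have : IsUniformAddGroup R := isUniformAddGroup_of_addCommGroup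
  have : (uniformity R).IsCountablyGenerated := by
    rw [uniformity_eq_comap_nhds_zero R]
    have := hI.hasBasis_nhds_zero.isCountablyGenerated
    infer_instance
  have := UniformSpace.pseudoMetrizableSpace (X := R)
  let := TopologicalSpace.pseudoMetrizableSpacePseudoMetric R
  infer_instance

theorem measurePreserving_fst_add_comp_snd {G α : Type*} [MeasurableSpace G] [MeasurableSpace α]
    [AddGroup G] [MeasurableAdd₂ G] (ν : Measure G) [SFinite ν] [ν.IsAddRightInvariant]
    (μ : Measure α) [SFinite μ] {f : α → G} (hf : Measurable f) :
    MeasurePreserving (fun p : G × α => (p.1 + f p.2, p.2)) (ν.prod μ) (ν.prod μ) := by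
  have shear :
      MeasurePreserving (fun p : α × G => (p.1, p.2 + f p.1)) (μ.prod ν) (μ.prod ν) :=
    (MeasurePreserving.id μ).skew_product (measurable_snd.add (hf.comp measurable_fst))
      (.of_forall fun a => (measurePreserving_add_right ν (f a)).map_eq)
  exact (Measure.measurePreserving_swap.comp shear).comp Measure.measurePreserving_swap

theorem measurePreserving_update_add_removeNth {n : ℕ} {α : Fin (n + 1) → Type*}
    [∀ i, MeasurableSpace (α i)] (μ : ∀ i, Measure (α i)) [∀ i, SigmaFinite (μ i)]
    (i : Fin (n + 1)) [AddGroup (α i)] [MeasurableAdd₂ (α i)] [(μ i).IsAddRightInvariant]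
    {f : (∀ j, α (i.succAbove j)) → α i} (hf : Measurable f) :
    MeasurePreserving (fun x => Function.update x i (x i + f (i.removeNth x)))
      (Measure.pi μ) (Measure.pi μ) := by
  have e := measurePreserving_piFinSuccAbove μ i
  convert (e.symm _).comp ((measurePreserving_fst_add_comp_snd _ _ hf).comp e) using 1
  funext x
  simp [Fin.insertNthEquiv, Fin.insertNth_removeNth]

theorem measurePreserving_comp_natAdd {m n : ℕ} {α : Type*} [MeasurableSpace α]
    (μ : Fin (m + n) → Measure α) [∀ i, IsProbabilityMeasure (μ i)] :
    MeasurePreserving (fun (x : Fin (m + n) → α) (j : Fin n) => x (Fin.natAdd m j))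
      (Measure.pi μ) (Measure.pi fun j => μ (Fin.natAdd m j)) := by
  have e := (measurePreserving_piCongrLeft (fun i => μ i) finSumFinEquiv).symm
  convert measurePreserving_snd.comp ((measurePreserving_sumPiEquivProdPi _).comp e) using 1
  · funext x j
    simp [MeasurableEquiv.sumPiEquivProdPi, MeasurableEquiv.piCongrLeft]
  · simp

theorem stmt_3_general {R : Type*} [CommRing R] [IsDomain R] [IsDiscreteValuationRing R]
    [TopologicalSpace R] [IsTopologicalRing R] [CompactSpace R]
    [MeasurableSpace R] [BorelSpace R]
    (hadic : IsAdic (IsLocalRing.maximalIdeal R))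
    (p : ℕ) (hp : p.Prime) (hp5 : 5 ≤ p) [CharP R p]
    (μ₅ : Measure (Fin 5 → R)) [μ₅.IsAddHaarMeasure] [IsProbabilityMeasure μ₅]
    (μ₂ : Measure (Fin 2 → R)) [μ₂.IsAddHaarMeasure] [IsProbabilityMeasure μ₂]
    (U : Set (Fin 2 → R)) (hU : IsOpen U) :
    μ₅ ((fun x : Fin 5 → R =>
        ![Ring.inverse (48 : R) * -((x 0) ^ 2 + 4 * x 1) ^ 2
            + Ring.inverse (2 : R) * (x 0 * x 2 + 2 * x 3),
          Ring.inverse (864 : R) * -((x 0) ^ 2 + 4 * x 1) ^ 3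
            - Ring.inverse (24 : R) * (((x 0) ^ 2 + 4 * x 1) * (x 0 * x 2 + 2 * x 3))
            + Ring.inverse (4 : R) * ((x 2) ^ 2 + 4 * x 4)]) ⁻¹' U) = μ₂ U := by
  have : SecondCountableTopology R := hadic.secondCountableTopology
  let ν : Measure R := Measure.addHaarMeasure ⊤
  have : IsProbabilityMeasure ν := ⟨Measure.addHaarMeasure_self⟩
  obtain rfl : μ₅ = Measure.pi fun _ => ν :=
    Measure.isAddHaarMeasure_eq_of_isProbabilityMeasure _ _
  obtain rfl : μ₂ = Measure.pi fun _ => ν :=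
    Measure.isAddHaarMeasure_eq_of_isProbabilityMeasure _ _
  have h2 : Ring.inverse (2 : R) * 2 = 1 := CharP.inverse_ofNat_mul_self_of_lt hp 2 (by omega)
  have h4 : Ring.inverse (4 : R) * 4 = 1 := CharP.inverse_ofNat_mul_self_of_lt hp 4 (by omega)
  let f : (Fin 4 → R) → R := fun y =>
    Ring.inverse 48 * -(y 0 ^ 2 + 4 * y 1) ^ 2 + Ring.inverse 2 * (y 0 * y 2)
  let g : (Fin 4 → R) → R := fun y =>
    Ring.inverse 864 * -(y 0 ^ 2 + 4 * y 1) ^ 3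
      - Ring.inverse 24 * ((y 0 ^ 2 + 4 * y 1) * (y 0 * y 2 + 2 * y 3)) + Ring.inverse 4 * y 2 ^ 2
  -- The shear of coordinate `4` comes first, since `g` reads the original `x 3`.
  refine MeasurePreserving.measure_preimage ?_ hU.measurableSet.nullMeasurableSet
  convert (measurePreserving_comp_natAdd (m := 3) (n := 2) fun _ => ν).comp
    ((measurePreserving_update_add_removeNth (fun _ => ν) 3 (f := f) (by fun_prop)).comp
      (measurePreserving_update_add_removeNth (fun _ => ν) 4 (f := g) (by fun_prop))) using 1
  funext x j
  fin_cases j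
  · simp only [Fin.zero_eta, Matrix.cons_val_zero, Function.comp_apply, Function.update,
      Fin.removeNth, Fin.succAbove, Fin.isValue, Fin.reduceNatAdd, Fin.reduceCastSucc,
      Fin.castSucc_zero, Fin.castSucc_one, Fin.reduceLT, Fin.reduceEq, reduceIte, reduceDIte, f]
    linear_combination x 3 * h2
  · simp only [Fin.mk_one, Matrix.cons_val_one, Matrix.cons_val_fin_one, Function.comp_apply,
      Function.update, Fin.removeNth, Fin.succAbove, Fin.isValue, Fin.reduceNatAdd,
      Fin.reduceCastSucc, Fin.castSucc_zero, Fin.castSucc_one, Fin.reduceLT, Fin.reduceEq,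
      reduceIte, reduceDIte, g]
    linear_combination x 4 * h4

/-- Assume `p ≥ 5`. Define `φ : R_P^5 → R_P^2` by
`φ(a₁,a₂,a₃,a₄,a₆) = (−b₂²/48 + b₄/2, −b₂³/864 − b₂·b₄/24 + b₆/4)`, where
`b₂ = a₁² + 4a₂`, `b₄ = a₁a₃ + 2a₄`, `b₆ = a₃² + 4a₆`. Then for every open subset `U` of
`R_P^2`, `μ_P(φ⁻¹(U)) = μ_P(U)`, the measures being the normalized Haar measures on
(the integer points of) `K_P^5` and `K_P^2` respectively. -/
theorem stmt_3 {R : Type*} [CommRing R] [IsDomain R] [IsDiscreteValuationRing R]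
    [TopologicalSpace R] [IsTopologicalRing R] [CompactSpace R]
    [MeasurableSpace R] [BorelSpace R]
    (hadic : IsAdic (IsLocalRing.maximalIdeal R))
    [Finite (IsLocalRing.ResidueField R)]
    (p : ℕ) (hp : p.Prime) (hp5 : 5 ≤ p) [CharP R p]
    (μ₅ : Measure (Fin 5 → R)) [μ₅.IsAddHaarMeasure] [IsProbabilityMeasure μ₅] [μ₅.Regular]
    (μ₂ : Measure (Fin 2 → R)) [μ₂.IsAddHaarMeasure] [IsProbabilityMeasure μ₂] [μ₂.Regular]
    (U : Set (Fin 2 → R)) (hU : IsOpen U) :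
    μ₅ ((fun x : Fin 5 → R =>
        ![Ring.inverse (48 : R) * -((x 0) ^ 2 + 4 * x 1) ^ 2
            + Ring.inverse (2 : R) * (x 0 * x 2 + 2 * x 3),
          Ring.inverse (864 : R) * -((x 0) ^ 2 + 4 * x 1) ^ 3
            - Ring.inverse (24 : R) * (((x 0) ^ 2 + 4 * x 1) * (x 0 * x 2 + 2 * x 3))
            + Ring.inverse (4 : R) * ((x 2) ^ 2 + 4 * x 4)]) ⁻¹' U) = μ₂ U :=
  stmt_3_general hadic p hp hp5 μ₅ μ₂ U hU
end

section
/- Assume p ≥ 5. Let N be a nonnegative integer and a4, a6 ∈ R_P. Suppose n1 ∈ R_P satisfies v_P(n1) = 1, v_P(a4 + 3n1²) ≥ ⌊(N+6)/2⌋ and v_P(n1³ + n1·a4 + a6) ≥ N + 4. Then an element n2 ∈ R_P satisfies v_P(n2) = 1, v_P(a4 + 3n2²) ≥ ⌊(N+6)/2⌋ and v_P(n2³ + n2·a4 + a6) ≥ N + 4 if and only if v_P(n1 − n2) ≥ ⌊(N+4)/2⌋. -/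
/-!
Put `m = ⌊(N+4)/2⌋`, so that `⌊(N+6)/2⌋ = m + 1` and `N + 4 ≤ 2m + 1`, and write `d = n₁ - n₂`,
`s = n₁ + n₂`. The two quadratic conditions differ by `3 s d`, and the
two cubic conditions by `d (a₄ + 3 n₂²) + d² (n₁ + 2 n₂)`. If `π²` does not divide `d`, then
`π^(m+1) ∣ s d` forces `π² ∣ s`, so `n₁ + 2 n₂ = s + n₂` has valuation one and the cubic
difference has valuation exactly three: impossible. Hence `π² ∣ d`, so `s = 2 n₁ - d` has
valuation one and `π^(m+1) ∣ s d` gives `π^m ∣ d`. Conversely, when `π^m ∣ d` the same two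
identities (with `n₁` and `n₂` swapped) carry every condition from `n₁` over to `n₂`.
-/

theorem Prime.pow_dvd_of_dvd_mul_of_not_sq_dvd {R : Type*} [CommMonoidWithZero R]
    [IsCancelMulZero R] {π a b : R} (hπ : Prime π) {n : ℕ} (ha : π ∣ a) (ha' : ¬π ^ 2 ∣ a)
    (h : π ^ (n + 1) ∣ a * b) : π ^ n ∣ b := by
  obtain ⟨t, rfl⟩ := ha
  have ht : ¬π ∣ t := fun ⟨c, hc⟩ => ha' ⟨c, by rw [hc, ← mul_assoc, ← pow_two]⟩
  rw [pow_succ', mul_assoc] at h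
  exact hπ.pow_dvd_of_dvd_mul_left n ht ((mul_dvd_mul_iff_left hπ.ne_zero).mp h)

theorem CharP.isUnit_ofNat_of_lt {R : Type*} [CommRing R] {p : ℕ} [CharP R p] (hp : p.Prime)
    {n : ℕ} [n.AtLeastTwo] (hn : n < p) : IsUnit (ofNat(n) : R) :=
  (CharP.isUnit_ofNat_iff hp).2 (Nat.not_dvd_of_pos_of_lt (Nat.pos_of_neZero _) hn)

section CubicCongruence

variable {R : Type*} [CommRing R] {π a₄ a₆ n₁ n₂ : R} {m k : ℕ}

theorem quadratic_sub_quadratic (a₄ x y : R) :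
    (a₄ + 3 * x ^ 2) - (a₄ + 3 * y ^ 2) = 3 * ((x + y) * (x - y)) := by
  ring

theorem cubic_sub_cubic (a₄ a₆ x y : R) :
    (x ^ 3 + x * a₄ + a₆) - (y ^ 3 + y * a₄ + a₆)
      = (x - y) * (a₄ + 3 * y ^ 2) + (x - y) ^ 2 * (x + 2 * y) := by
  ring

theorem pow_dvd_sub_of_conditions [IsDomain R] (hπ : Prime π) (h2 : IsUnit (2 : R))
    (h3 : IsUnit (3 : R)) (hm : 2 ≤ m) (hk : 4 ≤ k) (h₁ : π ∣ n₁) (h₁' : ¬π ^ 2 ∣ n₁)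
    (h₂ : π ^ (m + 1) ∣ a₄ + 3 * n₁ ^ 2) (h₃ : π ^ k ∣ n₁ ^ 3 + n₁ * a₄ + a₆)
    (k₁ : π ∣ n₂) (k₂ : ¬π ^ 2 ∣ n₂) (k₃ : π ^ (m + 1) ∣ a₄ + 3 * n₂ ^ 2)
    (k₄ : π ^ k ∣ n₂ ^ 3 + n₂ * a₄ + a₆) : π ^ m ∣ n₁ - n₂ := by
  have hsd : π ^ (m + 1) ∣ (n₁ + n₂) * (n₁ - n₂) :=
    h3.dvd_mul_left.mp (quadratic_sub_quadratic a₄ n₁ n₂ ▸ dvd_sub h₂ k₃)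
  have hd : π ∣ n₁ - n₂ := dvd_sub h₁ k₁
  have hd2 : π ^ 2 ∣ n₁ - n₂ := by
    by_contra hd2
    have hs2 : π ^ 2 ∣ n₁ + n₂ := (pow_dvd_pow π hm).trans
      (hπ.pow_dvd_of_dvd_mul_of_not_sq_dvd hd hd2 (mul_comm (n₁ + n₂) _ ▸ hsd))
    have he : ¬π ^ 2 ∣ n₁ + 2 * n₂ := fun he => k₂ <| by
      simpa [two_mul, ← add_assoc] using dvd_sub he hs2
    have hlin : π ^ 4 ∣ (n₁ - n₂) * (a₄ + 3 * n₂ ^ 2) :=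
      pow_succ' π 3 ▸ mul_dvd_mul hd ((pow_dvd_pow π (by omega : 3 ≤ m + 1)).trans k₃)
    have hcube : π ^ (2 + 1 + 1) ∣ (n₁ - n₂) * ((n₁ - n₂) * (n₁ + 2 * n₂)) := by
      rw [← mul_assoc, ← pow_two, (dvd_add_right hlin).symm, ← cubic_sub_cubic]
      exact (pow_dvd_pow π hk).trans (dvd_sub h₃ k₄)
    exact he (hπ.pow_dvd_of_dvd_mul_of_not_sq_dvd hd hd2
      (hπ.pow_dvd_of_dvd_mul_of_not_sq_dvd hd hd2 hcube))
  have hs : ¬π ^ 2 ∣ n₁ + n₂ := fun hs => h₁' <| h2.dvd_mul_left.mp <| by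
    simpa [two_mul] using dvd_add hs hd2
  exact hπ.pow_dvd_of_dvd_mul_of_not_sq_dvd (dvd_add h₁ k₁) hs hsd

theorem conditions_of_pow_dvd_sub (hm : 2 ≤ m) (hk : k ≤ 2 * m + 1)
    (h₁ : π ∣ n₁) (h₁' : ¬π ^ 2 ∣ n₁) (h₂ : π ^ (m + 1) ∣ a₄ + 3 * n₁ ^ 2)
    (h₃ : π ^ k ∣ n₁ ^ 3 + n₁ * a₄ + a₆) (hd : π ^ m ∣ n₁ - n₂) :
    π ∣ n₂ ∧ ¬π ^ 2 ∣ n₂ ∧ π ^ (m + 1) ∣ a₄ + 3 * n₂ ^ 2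
      ∧ π ^ k ∣ n₂ ^ 3 + n₂ * a₄ + a₆ := by
  have hd' : π ^ m ∣ n₂ - n₁ := dvd_sub_comm.mp hd
  have hd2 : π ^ 2 ∣ n₂ - n₁ := (pow_dvd_pow π hm).trans hd'
  have hn₂ : π ∣ n₂ := by
    simpa using dvd_add ((dvd_pow_self π two_ne_zero).trans hd2) h₁
  refine ⟨hn₂, fun h => h₁' (by simpa using dvd_sub h hd2), ?_, ?_⟩
  · refine (dvd_sub_left h₂).mp ?_
    rw [quadratic_sub_quadratic, pow_succ']
    exact (mul_dvd_mul (dvd_add hn₂ h₁) hd').mul_left 3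
  · refine (dvd_sub_left h₃).mp ((pow_dvd_pow π hk).trans ?_)
    rw [cubic_sub_cubic]
    refine dvd_add ?_ ?_
    · rw [show 2 * m + 1 = m + (m + 1) by omega, pow_add]
      exact mul_dvd_mul hd' h₂
    · rw [pow_succ, pow_mul']
      exact mul_dvd_mul (pow_dvd_pow_of_dvd hd' 2) (dvd_add hn₂ (h₁.mul_left 2))

end CubicCongruence

/-- Assume `p ≥ 5`. Let `N ≥ 0` and `a₄, a₆ ∈ R_P`. Suppose `n₁ ∈ R_P`
satisfies `v_P(n₁) = 1`, `v_P(a₄ + 3n₁²) ≥ ⌊(N+6)/2⌋` and `v_P(n₁³ + n₁a₄ + a₆) ≥ N + 4`.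
Then `n₂ ∈ R_P` satisfies `v_P(n₂) = 1`, `v_P(a₄ + 3n₂²) ≥ ⌊(N+6)/2⌋` and
`v_P(n₂³ + n₂a₄ + a₆) ≥ N + 4` if and only if `v_P(n₁ − n₂) ≥ ⌊(N+4)/2⌋`.
Valuation conditions are expressed via divisibility by powers of the uniformizer `π`. -/
theorem stmt_5 {R : Type*} [CommRing R] [IsDomain R] [IsDiscreteValuationRing R]
    (p : ℕ) (hp : p.Prime) (hp5 : 5 ≤ p) [CharP R p]
    (π : R) (hπ : Irreducible π) (N : ℕ) (a₄ a₆ n₁ n₂ : R)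
    (h₁ : π ∣ n₁) (h₁' : ¬ π ^ 2 ∣ n₁)
    (h₂ : π ^ ((N + 6) / 2) ∣ a₄ + 3 * n₁ ^ 2)
    (h₃ : π ^ (N + 4) ∣ n₁ ^ 3 + n₁ * a₄ + a₆) :
    (π ∣ n₂ ∧ ¬ π ^ 2 ∣ n₂ ∧ π ^ ((N + 6) / 2) ∣ a₄ + 3 * n₂ ^ 2
        ∧ π ^ (N + 4) ∣ n₂ ^ 3 + n₂ * a₄ + a₆)
      ↔ π ^ ((N + 4) / 2) ∣ n₁ - n₂ := by
  rw [show (N + 6) / 2 = (N + 4) / 2 + 1 by omega] at h₂ ⊢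
  constructor
  · rintro ⟨k₁, k₂, k₃, k₄⟩
    exact pow_dvd_sub_of_conditions hπ.prime (CharP.isUnit_ofNat_of_lt (n := 2) hp (by omega))
      (CharP.isUnit_ofNat_of_lt (n := 3) hp (by omega)) (by omega)
      (by omega) h₁ h₁' h₂ h₃ k₁ k₂ k₃ k₄
  · exact conditions_of_pow_dvd_sub (by omega) (by omega) h₁ h₁' h₂ h₃
end

section
/- Assume p ≥ 5 and let N be a positive integer. The μ_P-measure of the set of pairs (a,b) ∈ R_P^2 such that v_P(a) = 0, v_P(b) = 0 and v_P(4a³ + 27b²) ≥ N equals (Q_P − 1)/Q_P^{N+1}. -/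
/-!
Reduction modulo `m ^ N` maps `R²` onto the finite ring `A = R ⧸ m ^ N`, every fibre being a
coset of an open subgroup of index `Q ^ (2N)`, so the measure of the set is `#T / Q ^ (2N)` for the
set `T ⊆ A²` of pairs of units with `4a³ + 27b² = 0`. Since `2` and `3` are units, `u ↦ (-3u², 2u³)`
is a bijection from `Aˣ` onto `T`, and `#Aˣ = Q ^ N - Q ^ (N - 1)` because the non-units of `A` are
the kernel of `A → R ⧸ m`.
-/

open MeasureTheory
open scoped ENNReal

theorem AddMonoidHom.measure_preimage_eq_card_div {G H : Type*} [AddGroup G] [AddGroup H]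
    [Finite H] [MeasurableSpace G] [MeasurableAdd G] (μ : Measure G) [μ.IsAddLeftInvariant]
    [IsProbabilityMeasure μ] (f : G →+ H) (hf : Function.Surjective f)
    (hker : MeasurableSet (f.ker : Set G)) (s : Set H) :
    μ (f ⁻¹' s) = Nat.card s / Nat.card H := by
  have hfiber (c : H) : ∃ x₀, f ⁻¹' {c} = (x₀ + ·) ⁻¹' f.ker := by
    obtain ⟨x₀, rfl⟩ := hf c
    refine ⟨-x₀, Set.ext fun x => ?_⟩
    rw [Set.mem_preimage, Set.mem_singleton_iff, Set.mem_preimage, SetLike.mem_coe,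
      AddMonoidHom.mem_ker, map_add, map_neg, neg_add_eq_zero]
    exact eq_comm
  have hindex : f.ker.index = Nat.card H :=
    Nat.card_congr (QuotientAddGroup.quotientKerEquivOfSurjective f hf).toEquiv
  have hμker : μ f.ker = (Nat.card H : ℝ≥0∞)⁻¹ := by
    have := f.ker.index_mul_measure hker μ
    rw [hindex, measure_univ, mul_comm] at this
    exact ENNReal.eq_inv_of_mul_eq_one_left this
  have hμfiber (c : H) : μ (f ⁻¹' {c}) = (Nat.card H : ℝ≥0∞)⁻¹ := by
    obtain ⟨x₀, hx₀⟩ := hfiber c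
    rw [hx₀, measure_preimage_add, hμker]
  rw [← tsum_measure_preimage_singleton s.to_countable fun c _ => by
    obtain ⟨x₀, hx₀⟩ := hfiber c
    exact hx₀ ▸ hker.preimage (measurable_const_add x₀)]
  simp only [hμfiber, ENNReal.tsum_const, div_eq_mul_inv]
  rw [ENat.card_eq_coe_natCard, ENat.toENNReal_coe]

theorem RingHom.measurableSet_ker_compLeft_mk {R ι : Type*} [CommRing R] [MeasurableSpace R]
    [Countable ι] {I : Ideal R} (hI : MeasurableSet (I : Set R)) :
    MeasurableSet (((Ideal.Quotient.mk I).compLeft ι).toAddMonoidHom.ker : Set (ι → R)) := by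
  convert MeasurableSet.univ_pi fun _ : ι => hI
  ext x
  simp only [SetLike.mem_coe, AddMonoidHom.mem_ker, Set.mem_pi, Set.mem_univ, true_implies]
  exact funext_iff.trans (forall_congr' fun _ => Ideal.Quotient.eq_zero_iff_mem)

def discrZeroUnitPairs (A : Type*) [CommRing A] : Set (Fin 2 → A) :=
  {y | IsUnit (y 0) ∧ IsUnit (y 1) ∧ 4 * y 0 ^ 3 + 27 * y 1 ^ 2 = 0}

theorem card_discrZeroUnitPairs {A : Type*} [CommRing A] (h2 : IsUnit (2 : A))
    (h3 : IsUnit (3 : A)) : Nat.card (discrZeroUnitPairs A) = Nat.card {u : A // IsUnit u} := by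
  symm
  refine Nat.card_congr (Equiv.ofBijective (fun u => ⟨![-3 * u.1 ^ 2, 2 * u.1 ^ 3],
    h3.neg.mul (u.2.pow 2), h2.mul (u.2.pow 3),
    show 4 * (-3 * u.1 ^ 2) ^ 3 + 27 * (2 * u.1 ^ 3) ^ 2 = 0 by ring⟩) ⟨?_, ?_⟩)
  · rintro ⟨u, hu⟩ ⟨v, hv⟩ huv
    have hsq : u ^ 2 = v ^ 2 :=
      h3.neg.mul_left_cancel (by simpa using congrFun (congrArg Subtype.val huv) 0)
    have hcube : u ^ 3 = v ^ 3 :=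
      h2.mul_left_cancel (by simpa using congrFun (congrArg Subtype.val huv) 1)
    exact Subtype.ext ((hu.pow 2).mul_right_cancel (by linear_combination hcube - v * hsq))
  · rintro ⟨y, hy0, hy1, hdisc⟩
    obtain ⟨w, hw⟩ := (h2.mul hy0).exists_right_inv
    refine ⟨⟨-3 * y 1 * w, (h3.neg.mul hy1).mul (.of_mul_eq_one_right _ hw)⟩,
      Subtype.ext (funext (Fin.forall_fin_two.2 ⟨?_, ?_⟩))⟩
    · show -3 * (-3 * y 1 * w) ^ 2 = y 0
      linear_combination (-w ^ 2) * hdisc + y 0 * (2 * y 0 * w + 1) * hw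
    · show 2 * (-3 * y 1 * w) ^ 3 = y 1
      linear_combination (-2 * y 1 * w ^ 3) * hdisc +
        y 1 * ((2 * y 0 * w) ^ 2 + 2 * y 0 * w + 1) * hw

theorem CharP.isUnit_natCast_of_lt {R : Type*} [Ring R] {p : ℕ} [CharP R p] (hp : p.Prime)
    {k : ℕ} (hk0 : k ≠ 0) (hk : k < p) : IsUnit (k : R) :=
  (CharP.isUnit_natCast_iff hp).2 (Nat.not_dvd_of_pos_of_lt (Nat.pos_of_ne_zero hk0) hk)

section QuotientPow

variable {S : Type*} [CommRing S] (M : Ideal S) [M.IsMaximal] {n : ℕ}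

theorem Ideal.card_quotient_pow_eq_card_quotient_mul_card_nonunits (hn : n ≠ 0) :
    Nat.card (S ⧸ M ^ n) = Nat.card (S ⧸ M) * Nat.card {a : S ⧸ M ^ n // ¬ IsUnit a} := by
  let g := (Ideal.Quotient.factor (M.pow_le_self hn)).toAddMonoidHom
  have hg : Function.Surjective g := Ideal.Quotient.factor_surjective (M.pow_le_self hn)
  rw [AddSubgroup.card_eq_card_quotient_mul_card_addSubgroup g.ker,
    Nat.card_congr (QuotientAddGroup.quotientKerEquivOfSurjective g hg).toEquiv]
  congr 1
  refine Nat.card_congr (Equiv.subtypeEquivRight fun a => ?_)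
  obtain ⟨x, rfl⟩ := Ideal.Quotient.mk_surjective a
  rw [Ideal.Quotient.isUnit_mk_pow_iff_notMem M hn, not_not, AddMonoidHom.mem_ker]
  exact Ideal.Quotient.eq_zero_iff_mem

theorem Ideal.card_units_quotient_pow_mul_card_quotient (hn : n ≠ 0) [Finite (S ⧸ M ^ n)] :
    Nat.card {a : S ⧸ M ^ n // IsUnit a} * Nat.card (S ⧸ M) =
      Nat.card (S ⧸ M ^ n) * (Nat.card (S ⧸ M) - 1) := by
  classical
  have hsum : Nat.card {a : S ⧸ M ^ n // IsUnit a} + Nat.card {a : S ⧸ M ^ n // ¬ IsUnit a} =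
      Nat.card (S ⧸ M ^ n) := by
    rw [← Nat.card_sum]
    exact Nat.card_congr (Equiv.sumCompl _)
  rw [Nat.mul_sub_one]
  refine Nat.eq_sub_of_add_eq ?_
  nth_rw 1 [M.card_quotient_pow_eq_card_quotient_mul_card_nonunits hn]
  rw [← hsum]
  ring

end QuotientPow

section DVR

open IsLocalRing

variable {R : Type*} [CommRing R] [IsDomain R] [IsDiscreteValuationRing R] {π : R} {n : ℕ}

theorem Irreducible.not_dvd_iff_isUnit_mk_maximalIdeal_pow (hπ : Irreducible π) (hn : n ≠ 0)
    {x : R} : ¬ π ∣ x ↔ IsUnit (Ideal.Quotient.mk (maximalIdeal R ^ n) x) := by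
  rw [Ideal.Quotient.isUnit_mk_pow_iff_notMem _ hn, hπ.maximalIdeal_eq, Ideal.mem_span_singleton]

theorem Irreducible.pow_dvd_iff_mk_maximalIdeal_pow_eq_zero (hπ : Irreducible π) {x : R} :
    π ^ n ∣ x ↔ Ideal.Quotient.mk (maximalIdeal R ^ n) x = 0 := by
  rw [Ideal.Quotient.eq_zero_iff_mem, hπ.maximalIdeal_eq, Ideal.span_singleton_pow,
    Ideal.mem_span_singleton]

theorem Irreducible.compLeft_preimage_discrZeroUnitPairs (hπ : Irreducible π) (hn : n ≠ 0) :
    (Ideal.Quotient.mk (maximalIdeal R ^ n)).compLeft (Fin 2) ⁻¹'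
        discrZeroUnitPairs (R ⧸ maximalIdeal R ^ n) =
      {x : Fin 2 → R | ¬ π ∣ x 0 ∧ ¬ π ∣ x 1 ∧ π ^ n ∣ 4 * x 0 ^ 3 + 27 * x 1 ^ 2} := by
  ext x
  simp only [Set.mem_ofPred_eq, Set.mem_preimage, hπ.not_dvd_iff_isUnit_mk_maximalIdeal_pow hn,
    hπ.pow_dvd_iff_mk_maximalIdeal_pow_eq_zero, map_add, map_mul, map_pow, map_ofNat]
  rfl

variable (R) in
theorem IsDiscreteValuationRing.card_quotient_maximalIdeal_pow (n : ℕ) :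
    Nat.card (R ⧸ IsLocalRing.maximalIdeal R ^ n) = Nat.card (ResidueField R) ^ n := by
  rw [← Submodule.cardQuot_apply, cardQuot_pow_of_prime (IsDiscreteValuationRing.not_a_field R),
    Submodule.cardQuot_apply]
  rfl

end DVR

theorem ENNReal.natCast_div_pow_sq_eq_sub_one_div_pow_succ {U Q N : ℕ} (hQ : Q ≠ 0) (hU : U * Q = Q ^ N * (Q - 1)) :
    (U : ℝ≥0∞) / ((Q ^ N) ^ 2 : ℕ) = ((Q : ℝ≥0∞) - 1) / (Q : ℝ≥0∞) ^ (N + 1) := by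
  rw [ENNReal.div_eq_div_iff (by positivity) (by finiteness) (by positivity) (by finiteness),
    show (Q : ℝ≥0∞) - 1 = ((Q - 1 : ℕ) : ℝ≥0∞) by norm_cast]
  norm_cast
  calc Q ^ (N + 1) * U = Q ^ N * (U * Q) := by ring
    _ = (Q ^ N) ^ 2 * (Q - 1) := by rw [hU]; ring

theorem stmt_6_general {R : Type*} [CommRing R] [IsDomain R] [IsDiscreteValuationRing R]
    [TopologicalSpace R] [IsTopologicalRing R]
    [MeasurableSpace R] [BorelSpace R]
    (hadic : IsAdic (IsLocalRing.maximalIdeal R))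
    [Finite (IsLocalRing.ResidueField R)]
    (Q : ℕ) (hQ : Nat.card (IsLocalRing.ResidueField R) = Q)
    (p : ℕ) (hp : p.Prime) (hp5 : 5 ≤ p) [CharP R p]
    (π : R) (hπ : Irreducible π) (N : ℕ) (hN : 0 < N)
    (μ : Measure (Fin 2 → R)) [μ.IsAddHaarMeasure] [IsProbabilityMeasure μ] :
    μ {x : Fin 2 → R | ¬ π ∣ x 0 ∧ ¬ π ∣ x 1 ∧ π ^ N ∣ 4 * (x 0) ^ 3 + 27 * (x 1) ^ 2}
      = ((Q : ℝ≥0∞) - 1) / (Q : ℝ≥0∞) ^ (N + 1) := by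
  set M := IsLocalRing.maximalIdeal R
  have hQ0 : Q ≠ 0 := hQ ▸ Nat.card_pos.ne'
  have hcard : Nat.card (R ⧸ M ^ N) = Q ^ N := by
    rw [IsDiscreteValuationRing.card_quotient_maximalIdeal_pow, hQ]
  have : Finite (R ⧸ M ^ N) := Nat.finite_of_card_ne_zero (hcard ▸ pow_ne_zero N hQ0)
  have hunit (k : ℕ) (hk0 : k ≠ 0) (hk : k < p) : IsUnit (k : R ⧸ M ^ N) := by
    simpa using (CharP.isUnit_natCast_of_lt (R := R) hp hk0 hk).map (Ideal.Quotient.mk (M ^ N))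
  have hunits : Nat.card {u : R ⧸ M ^ N // IsUnit u} * Q = Q ^ N * (Q - 1) := by
    rw [← hcard, ← hQ]
    exact M.card_units_quotient_pow_mul_card_quotient hN.ne'
  have hI : MeasurableSet ((M ^ N : Ideal R) : Set R) := ((isAdic_iff.mp hadic).1 N).measurableSet
  rw [← hπ.compLeft_preimage_discrZeroUnitPairs hN.ne']
  refine (AddMonoidHom.measure_preimage_eq_card_div μ
    ((Ideal.Quotient.mk (M ^ N)).compLeft (Fin 2)).toAddMonoidHom
    Ideal.Quotient.mk_surjective.comp_left (RingHom.measurableSet_ker_compLeft_mk hI) _).trans ?_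
  rw [card_discrZeroUnitPairs (by exact_mod_cast hunit 2 two_ne_zero (by omega))
    (by exact_mod_cast hunit 3 three_ne_zero (by omega)), Nat.card_fun, Nat.card_fin, hcard]
  exact ENNReal.natCast_div_pow_sq_eq_sub_one_div_pow_succ hQ0 hunits

/-- Assume `p ≥ 5` and let `N ≥ 1`. The normalized Haar measure of the set
of pairs `(a, b) ∈ R_P^2` with `v_P(a) = 0`, `v_P(b) = 0` and `v_P(4a³ + 27b²) ≥ N` equals
`(Q_P − 1)/Q_P^{N+1}`, where `Q_P` is the cardinality of the residue field. -/
theorem stmt_6 {R : Type*} [CommRing R] [IsDomain R] [IsDiscreteValuationRing R]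
    [TopologicalSpace R] [IsTopologicalRing R] [CompactSpace R]
    [MeasurableSpace R] [BorelSpace R]
    (hadic : IsAdic (IsLocalRing.maximalIdeal R))
    [Finite (IsLocalRing.ResidueField R)]
    (Q : ℕ) (hQ : Nat.card (IsLocalRing.ResidueField R) = Q)
    (p : ℕ) (hp : p.Prime) (hp5 : 5 ≤ p) [CharP R p]
    (π : R) (hπ : Irreducible π) (N : ℕ) (hN : 0 < N)
    (μ : Measure (Fin 2 → R)) [μ.IsAddHaarMeasure] [IsProbabilityMeasure μ] [μ.Regular] :
    μ {x : Fin 2 → R | ¬ π ∣ x 0 ∧ ¬ π ∣ x 1 ∧ π ^ N ∣ 4 * (x 0) ^ 3 + 27 * (x 1) ^ 2}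
      = ((Q : ℝ≥0∞) - 1) / (Q : ℝ≥0∞) ^ (N + 1) :=
  stmt_6_general hadic Q hQ p hp hp5 π hπ N hN μ
end

section
/- Assume p ≥ 5 and let N be a positive integer. The number of pairs (a,b) of units of the quotient ring R_P/π_P^N R_P satisfying 4a³ + 27b² = 0 in R_P/π_P^N R_P equals Q_P^N − Q_P^{N−1}. -/
/-!
Since `p ≥ 5`, both `2` and `3` are units of `R/π^N`, and the solutions in units of
`4a³ + 27b² = 0` are exactly the pairs `(-3u², 2u³)` for a unit `u`, which is recovered as
`u = -3b/(2a)`. So the count is the number of units of `R/π^N`. A residue is a unit iff its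
image in the residue field `R/π` is nonzero, and the kernel of the reduction has index `Q`
in a ring of `Q^N` elements, so there are `Q^N - Q^(N-1)` units.
-/

open Ideal

noncomputable def unitsEquivDiscrZero {S : Type*} [CommRing S] (h2 : IsUnit (2 : S))
    (h3 : IsUnit (3 : S)) :
    Sˣ ≃ {x : Sˣ × Sˣ // 4 * (x.1 : S) ^ 3 + 27 * (x.2 : S) ^ 2 = 0} where
  toFun u := ⟨(-(h3.unit * u ^ 2), h2.unit * u ^ 3), by
    simp only [Units.val_neg, Units.val_mul, Units.val_pow_eq_pow_val, IsUnit.unit_spec]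
    ring⟩
  invFun x := -(h3.unit * x.1.2) * (h2.unit * x.1.1)⁻¹
  left_inv u := by
    rw [mul_inv_eq_iff_eq_mul]
    ext
    simp only [Units.val_neg, Units.val_mul, Units.val_pow_eq_pow_val, IsUnit.unit_spec]
    ring
  right_inv := by
    rintro ⟨⟨a, b⟩, h : 4 * (a : S) ^ 3 + 27 * (b : S) ^ 2 = 0⟩
    have hw := congrArg Units.val (mul_inv_cancel (h2.unit * a))
    set w : S := ↑(h2.unit * a)⁻¹
    simp only [Units.val_mul, IsUnit.unit_spec, Units.val_one] at hw
    ext <;> simp only [Units.val_neg, Units.val_mul, Units.val_pow_eq_pow_val, IsUnit.unit_spec]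
    · linear_combination (-w ^ 2) * h + a * (2 * a * w + 1) * hw
    · linear_combination (-2 * b * w ^ 3) * h + b * (4 * a ^ 2 * w ^ 2 + 2 * a * w + 1) * hw

namespace RingHom

variable {S F : Type*} [CommRing S]

theorem card_units_add_card_ker [DivisionRing F] [_root_.Finite S] (φ : S →+* F)
    [IsLocalHom φ] :
    Nat.card Sˣ + Nat.card (ker φ) = Nat.card S := by
  have hunits : Set.range ((↑) : Sˣ → S) = (ker φ : Set S)ᶜ := by
    ext x
    change IsUnit x ↔ φ x ∉ ({0} : Set F)
    rw [← isUnit_map_iff φ x, isUnit_iff_ne_zero]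
    rfl
  rw [← Nat.card_range_of_injective Units.val_injective, hunits]
  exact Set.ncard_compl_add_ncard _

theorem card_eq_card_mul_card_ker [Ring F] (φ : S →+* F) (hφ : Function.Surjective φ) :
    Nat.card S = Nat.card F * Nat.card (ker φ) := by
  rw [← φ.toAddMonoidHom.ker.card_mul_index, AddSubgroup.index_ker, mul_comm,
    AddMonoidHom.range_eq_top.2 hφ, AddSubgroup.card_top]
  rfl

end RingHom

section Quotient

variable {R : Type*} [CommRing R]

theorem card_quotient_span_pow [IsDedekindDomain R] {π : R} (hπ : Prime π) (n : ℕ) :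
    Nat.card (R ⧸ span {π ^ n}) = Nat.card (R ⧸ span {π}) ^ n := by
  have : (span {π}).IsPrime := (span_singleton_prime hπ.ne_zero).2 hπ
  rw [← span_singleton_pow, ← Submodule.cardQuot_apply, ← Submodule.cardQuot_apply]
  exact cardQuot_pow_of_prime (by simpa using hπ.ne_zero)

theorem card_units_quotient_span_pow [IsDomain R] [IsDiscreteValuationRing R] {π : R}
    (hπ : Irreducible π) [Finite (R ⧸ span {π})] {N : ℕ} (hN : 0 < N) :
    Nat.card (R ⧸ span {π ^ N})ˣ =
      Nat.card (R ⧸ span {π}) ^ N - Nat.card (R ⧸ span {π}) ^ (N - 1) := by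
  set Q := Nat.card (R ⧸ span {π})
  have hcard : Nat.card (R ⧸ span {π ^ N}) = Q ^ N :=
    card_quotient_span_pow (UniqueFactorizationMonoid.irreducible_iff_prime.1 hπ) N
  have := PrincipalIdealRing.isMaximal_of_irreducible hπ
  let := Ideal.Quotient.field (span {π})
  let φ := Ideal.Quotient.factor (span_singleton_le_span_singleton.2 (dvd_pow_self π hN.ne'))
  have hφ : Function.Surjective φ := Ideal.Quotient.factor_surjective _
  have : Nontrivial (R ⧸ span {π ^ N}) := hφ.nontrivial
  have : IsLocalRing (R ⧸ span {π ^ N}) := .of_surjective' _ Ideal.Quotient.mk_surjective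
  have : IsLocalHom φ := .of_surjective φ hφ
  have hQ : 0 < Q := Nat.card_pos
  have : Finite (R ⧸ span {π ^ N}) := Nat.finite_of_card_ne_zero (hcard ▸ (pow_pos hQ N).ne')
  have hker : Nat.card (RingHom.ker φ) = Q ^ (N - 1) := by
    have h := φ.card_eq_card_mul_card_ker hφ
    rw [hcard, ← pow_sub_one_mul hN.ne', mul_comm] at h
    exact (Nat.eq_of_mul_eq_mul_left hQ h).symm
  have := φ.card_units_add_card_ker
  omega

end Quotient

/-- Assume `p ≥ 5` and let `N ≥ 1`. The number of pairs `(a, b)` of units of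
the quotient ring `R_P/π_P^N R_P` satisfying `4a³ + 27b² = 0` in `R_P/π_P^N R_P` equals
`Q_P^N − Q_P^{N−1}`, where `Q_P` is the cardinality of the residue field `R_P/π_P R_P`. -/
theorem stmt_8 {R : Type*} [CommRing R] [IsDomain R] [IsDiscreteValuationRing R]
    (p : ℕ) (hp : p.Prime) (hp5 : 5 ≤ p) [CharP R p]
    (π : R) (hπ : Irreducible π)
    [Finite (R ⧸ Ideal.span {π})]
    (Q : ℕ) (hQ : Nat.card (R ⧸ Ideal.span {π}) = Q)
    (N : ℕ) (hN : 0 < N) :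
    Nat.card {x : (R ⧸ Ideal.span {π ^ N})ˣ × (R ⧸ Ideal.span {π ^ N})ˣ //
        4 * (x.1 : R ⧸ Ideal.span {π ^ N}) ^ 3
          + 27 * (x.2 : R ⧸ Ideal.span {π ^ N}) ^ 2 = 0}
      = Q ^ N - Q ^ (N - 1) := by
  have hunit (n : ℕ) (h0 : 0 < n) (hn : n < p) : IsUnit (n : R ⧸ span {π ^ N}) := by
    simpa using ((CharP.isUnit_natCast_iff (R := R) hp).2
      (Nat.not_dvd_of_pos_of_lt h0 hn)).map (Ideal.Quotient.mk (span {π ^ N}))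
  have h2 : IsUnit (2 : R ⧸ span {π ^ N}) := by exact_mod_cast hunit 2 two_pos (by omega)
  have h3 : IsUnit (3 : R ⧸ span {π ^ N}) := by exact_mod_cast hunit 3 three_pos (by omega)
  rw [← hQ, ← card_units_quotient_span_pow hπ hN]
  exact (Nat.card_congr (unitsEquivDiscrZero h2 h3)).symm
end

section
/- Assume p = 3. Define φ : R_P^5 → R_P^3 by φ(a1,a2,a3,a4,a6) = (b2/4, b4/2, b6/4), where b2 = a1² + 4a2, b4 = a1a3 + 2a4, b6 = a3² + 4a6. Then for every open subset U of R_P^3, μ_P(φ^{-1}(U)) = μ_P(U), where the left-hand measure is the normalized Haar measure on K_P^5 and the right-hand one on K_P^3. -/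
/-!
Since `2` is a unit, shifting `(a₂, a₄, a₆)` by `t` translates `φ` by `t`. Hence `φ` pushes the
Haar probability measure of `R⁵` forward to a translation-invariant probability measure on `R³`,
which charges every nonempty open set because `φ` is continuous and surjective. By uniqueness of
Haar measure it is `μ₃`. The adic topology makes `R` second countable, which is what identifies
the product σ-algebras with the Borel ones.
-/

open MeasureTheory Filter Topology

theorem IsAdic.isCountablyGenerated_nhds_zero {R : Type*} [CommRing R] [TopologicalSpace R]
    {I : Ideal R} (hI : IsAdic I) : (𝓝 (0 : R)).IsCountablyGenerated := by
  rw [hI]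
  exact I.hasBasis_nhds_zero_adic.isCountablyGenerated

/-- The uniformity is countably generated, so the group is pseudo-metrizable, and compact
pseudo-metrizable spaces are second countable. -/
theorem IsTopologicalAddGroup.secondCountableTopology_of_compactSpace (G : Type*) [AddCommGroup G] [TopologicalSpace G]
    [IsTopologicalAddGroup G] [CompactSpace G] [(𝓝 (0 : G)).IsCountablyGenerated] :
    SecondCountableTopology G := by
  let := IsTopologicalAddGroup.rightUniformSpace G
  have := isUniformAddGroup_of_addCommGroup (G := G)
  have := IsUniformAddGroup.uniformity_countably_generated (α := G)
  infer_instance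

namespace MeasureTheory.Measure

variable {G H : Type*} [AddGroup G] [TopologicalSpace G] [IsTopologicalAddGroup G]
  [MeasurableSpace G] [BorelSpace G]
  [AddGroup H] [TopologicalSpace H] [IsTopologicalAddGroup H] [MeasurableSpace H] [BorelSpace H]

theorem isAddHaarMeasure_map_of_map_add (μ : Measure G) [μ.IsAddLeftInvariant]
    [μ.IsOpenPosMeasure] [IsFiniteMeasure μ] {f : G → H} (hf : Continuous f) (σ : H → G)
    (hσ : ∀ t x, f (σ t + x) = t + f x) : (μ.map f).IsAddHaarMeasure where
  map_add_left_eq_self t := by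
    rw [map_map (measurable_const_add t) hf.measurable]
    have : (t + ·) ∘ f = f ∘ (σ t + ·) := funext fun x => (hσ t x).symm
    rw [this, ← map_map hf.measurable (measurable_const_add _), map_add_left_eq_self]
  open_pos V hV hVne := by
    obtain ⟨v, hv⟩ := hVne
    rw [map_apply hf.measurable hV.measurableSet]
    refine (hV.preimage hf).measure_ne_zero μ ⟨σ (v - f 0), ?_⟩
    have : f (σ (v - f 0)) = v := by rw [← add_zero (σ _), hσ, sub_add_cancel]
    rwa [Set.mem_preimage, this]

theorem map_eq_of_map_add [LocallyCompactSpace H] (μ : Measure G) [μ.IsAddHaarMeasure]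
    [IsProbabilityMeasure μ] (ν : Measure H) [ν.IsAddHaarMeasure] [IsProbabilityMeasure ν]
    {f : G → H} (hf : Continuous f) (σ : H → G) (hσ : ∀ t x, f (σ t + x) = t + f x) :
    μ.map f = ν :=
  have := isAddHaarMeasure_map_of_map_add μ hf σ hσ
  have := isProbabilityMeasure_map (μ := μ) hf.aemeasurable
  isAddHaarMeasure_eq_of_isProbabilityMeasure _ _

end MeasureTheory.Measure

section ScaledB

variable {R : Type*} [CommRing R]

/-- `(a₁, a₂, a₃, a₄, a₆) ↦ (b₂/4, b₄/2, b₆/4)`, the divisions being `Ring.inverse`. -/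
noncomputable def weierstrassScaledB (a : Fin 5 → R) : Fin 3 → R :=
  ![Ring.inverse (4 : R) * ((a 0) ^ 2 + 4 * a 1),
    Ring.inverse (2 : R) * (a 0 * a 2 + 2 * a 3),
    Ring.inverse (4 : R) * ((a 2) ^ 2 + 4 * a 4)]

theorem continuous_weierstrassScaledB [TopologicalSpace R] [IsTopologicalRing R] :
    Continuous (weierstrassScaledB (R := R)) := by
  refine continuous_pi fun i => ?_
  fin_cases i <;> simp only [weierstrassScaledB] <;> fun_prop

theorem weierstrassScaledB_add (h2 : IsUnit (2 : R)) (t : Fin 3 → R) (a : Fin 5 → R) :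
    weierstrassScaledB (![0, t 0, 0, t 1, t 2] + a) = t + weierstrassScaledB a := by
  have h4 : Ring.inverse (4 : R) * 4 = 1 :=
    Ring.inverse_mul_cancel _ (by rw [show (4 : R) = 2 * 2 by norm_num]; exact h2.mul h2)
  have h2' : Ring.inverse (2 : R) * 2 = 1 := Ring.inverse_mul_cancel _ h2
  ext i
  fin_cases i <;>
    simp only [weierstrassScaledB, Fin.isValue, Pi.add_apply, Matrix.cons_val_zero, zero_add,
      Matrix.cons_val_one, Matrix.cons_val, Fin.zero_eta, Fin.mk_one, Fin.reduceFinMk]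
  · linear_combination t 0 * h4
  · linear_combination t 1 * h2'
  · linear_combination t 2 * h4

end ScaledB

theorem stmt_10_general {R : Type*} [CommRing R] [IsDomain R] [IsDiscreteValuationRing R]
    [TopologicalSpace R] [IsTopologicalRing R] [CompactSpace R]
    [MeasurableSpace R] [BorelSpace R]
    (hadic : IsAdic (IsLocalRing.maximalIdeal R))
    [CharP R 3]
    (μ₅ : Measure (Fin 5 → R)) [μ₅.IsAddHaarMeasure] [IsProbabilityMeasure μ₅]
    (μ₃ : Measure (Fin 3 → R)) [μ₃.IsAddHaarMeasure] [IsProbabilityMeasure μ₃]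
    (U : Set (Fin 3 → R)) (hU : IsOpen U) :
    μ₅ ((fun x : Fin 5 → R =>
        ![Ring.inverse (4 : R) * ((x 0) ^ 2 + 4 * x 1),
          Ring.inverse (2 : R) * (x 0 * x 2 + 2 * x 3),
          Ring.inverse (4 : R) * ((x 2) ^ 2 + 4 * x 4)]) ⁻¹' U) = μ₃ U := by
  have := hadic.isCountablyGenerated_nhds_zero
  have := IsTopologicalAddGroup.secondCountableTopology_of_compactSpace R
  have h2 : IsUnit (2 : R) := by
    have := invertibleOfCoprime (R := R) (n := 2) (p := 3) (by norm_num)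
    simpa using isUnit_of_invertible ((2 : ℕ) : R)
  have hmap : μ₅.map weierstrassScaledB = μ₃ :=
    Measure.map_eq_of_map_add μ₅ μ₃ continuous_weierstrassScaledB _ (weierstrassScaledB_add h2)
  rw [← hmap, Measure.map_apply continuous_weierstrassScaledB.measurable hU.measurableSet]
  rfl

/-- Assume `p = 3`. Define `φ : R_P^5 → R_P^3` by
`φ(a₁,a₂,a₃,a₄,a₆) = (b₂/4, b₄/2, b₆/4)`, where `b₂ = a₁² + 4a₂`, `b₄ = a₁a₃ + 2a₄`,
`b₆ = a₃² + 4a₆`. Then for every open subset `U` of `R_P^3`, `μ_P(φ⁻¹(U)) = μ_P(U)`,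
the measures being the normalized Haar measures on (the integer points of) `K_P^5` and
`K_P^3` respectively. -/
theorem stmt_10 {R : Type*} [CommRing R] [IsDomain R] [IsDiscreteValuationRing R]
    [TopologicalSpace R] [IsTopologicalRing R] [CompactSpace R]
    [MeasurableSpace R] [BorelSpace R]
    (hadic : IsAdic (IsLocalRing.maximalIdeal R))
    [Finite (IsLocalRing.ResidueField R)]
    [CharP R 3]
    (μ₅ : Measure (Fin 5 → R)) [μ₅.IsAddHaarMeasure] [IsProbabilityMeasure μ₅] [μ₅.Regular]
    (μ₃ : Measure (Fin 3 → R)) [μ₃.IsAddHaarMeasure] [IsProbabilityMeasure μ₃] [μ₃.Regular]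
    (U : Set (Fin 3 → R)) (hU : IsOpen U) :
    μ₅ ((fun x : Fin 5 → R =>
        ![Ring.inverse (4 : R) * ((x 0) ^ 2 + 4 * x 1),
          Ring.inverse (2 : R) * (x 0 * x 2 + 2 * x 3),
          Ring.inverse (4 : R) * ((x 2) ^ 2 + 4 * x 4)]) ⁻¹' U) = μ₃ U :=
  stmt_10_general hadic μ₅ μ₃ U hU
end

section
/- Assume p = 3 and let k be a nonnegative integer. Let a2, a4, a6 ∈ R_P and let n1, n2 ∈ R_P be such that v_P(a2) ≥ 2k, and for each i ∈ {1,2}: v_P(2·n_i·a2 + a4) ≥ 4k and v_P(n_i²·a2 + n_i·a4 + a6 + n_i³) ≥ 6k. Then v_P(n1 − n2) ≥ 2k. -/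
/-!
Put `d = n₁ - n₂` and `f(x) = x³ + a₂x² + a₄x + a₆`, so that `f'(x) = 2a₂x + a₄` in characteristic
`3`. Taylor expansion at `n₁` gives `d²(d - a₂) = f(n₁) - f(n₂) - d f'(n₁)`. If `v(d) < 2k`, then
`v(d - a₂) = v(d)` and the left side has valuation `3v(d)`, whereas the right side has valuation
at least `min(6k, v(d) + 4k) > 3v(d)`.
-/

open IsDiscreteValuationRing

theorem sq_mul_sub_eq_cubic_sub_of_charP_three {R : Type*} [CommRing R] [CharP R 3]
    (a₂ a₄ a₆ n₁ n₂ : R) :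
    (n₁ - n₂) ^ 2 * ((n₁ - n₂) - a₂) =
      (n₁ ^ 2 * a₂ + n₁ * a₄ + a₆ + n₁ ^ 3) - (n₂ ^ 2 * a₂ + n₂ * a₄ + a₆ + n₂ ^ 3)
        - (n₁ - n₂) * (2 * n₁ * a₂ + a₄) := by
  linear_combination -(n₁ * n₂ * (n₁ - n₂)) * CharP.cast_eq_zero R 3

theorem AddValuation.le_of_sq_mul_sub_eq {R : Type*} [CommRing R] (v : AddValuation R ℕ∞)
    {a d x y : R} {k : ℕ} (ha : 2 * k ≤ v a) (hx : 6 * k ≤ v x) (hy : 4 * k ≤ v y)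
    (h : d ^ 2 * (d - a) = x - d * y) : 2 * k ≤ v d := by
  by_contra! hd
  have hda : v (d - a) = v d := v.map_sub_eq_of_lt_left (hd.trans_le ha)
  lift v d to ℕ using hd.ne_top with m hm
  have hm' : m < 2 * k := by exact_mod_cast hd
  have hlhs : v (d ^ 2 * (d - a)) = 3 * m := by
    rw [v.map_mul, v.map_pow, hda, ← hm]; ring
  have hrhs : 3 * (m : ℕ∞) < v (x - d * y) := by
    refine lt_of_lt_of_le ?_ (v.map_sub _ _)
    rw [v.map_mul, ← hm]
    refine lt_min (lt_of_lt_of_le ?_ hx) (lt_of_lt_of_le ?_ (add_le_add_right hy _))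
    · norm_cast; omega
    · norm_cast; omega
  rw [← h, hlhs] at hrhs
  exact lt_irrefl _ hrhs

theorem Irreducible.pow_dvd_iff_le_addVal {R : Type*} [CommRing R] [IsDomain R]
    [IsDiscreteValuationRing R] {π : R} (hπ : Irreducible π) {n : ℕ} {x : R} :
    π ^ n ∣ x ↔ (n : ℕ∞) ≤ addVal R x := by
  rw [← addVal_le_iff_dvd, hπ.addVal_pow]

theorem stmt_11_general {R : Type*} [CommRing R] [IsDomain R] [IsDiscreteValuationRing R]
    [CharP R 3] (π : R) (hπ : Irreducible π) (k : ℕ)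
    (a₂ a₄ a₆ n₁ n₂ : R)
    (ha : π ^ (2 * k) ∣ a₂)
    (h₁ : π ^ (4 * k) ∣ 2 * n₁ * a₂ + a₄)
    (h₁' : π ^ (6 * k) ∣ n₁ ^ 2 * a₂ + n₁ * a₄ + a₆ + n₁ ^ 3)
    (h₂' : π ^ (6 * k) ∣ n₂ ^ 2 * a₂ + n₂ * a₄ + a₆ + n₂ ^ 3) :
    π ^ (2 * k) ∣ n₁ - n₂ := by
  have hw : π ^ (6 * k) ∣ (n₁ ^ 2 * a₂ + n₁ * a₄ + a₆ + n₁ ^ 3) -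
      (n₂ ^ 2 * a₂ + n₂ * a₄ + a₆ + n₂ ^ 3) := dvd_sub h₁' h₂'
  simp only [hπ.pow_dvd_iff_le_addVal, Nat.cast_mul, Nat.cast_ofNat] at ha h₁ hw ⊢
  exact (addVal R).le_of_sq_mul_sub_eq ha hw h₁
    (sq_mul_sub_eq_cubic_sub_of_charP_three a₂ a₄ a₆ n₁ n₂)

/-- Assume `p = 3` and let `k ≥ 0`. Let `a₂, a₄, a₆ ∈ R_P` and let
`n₁, n₂ ∈ R_P` be such that `v_P(a₂) ≥ 2k` and, for each `i ∈ {1, 2}`,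
`v_P(2nᵢa₂ + a₄) ≥ 4k` and `v_P(nᵢ²a₂ + nᵢa₄ + a₆ + nᵢ³) ≥ 6k`.
Then `v_P(n₁ − n₂) ≥ 2k`. -/
theorem stmt_11 {R : Type*} [CommRing R] [IsDomain R] [IsDiscreteValuationRing R]
    [CharP R 3] (π : R) (hπ : Irreducible π) (k : ℕ)
    (a₂ a₄ a₆ n₁ n₂ : R)
    (ha : π ^ (2 * k) ∣ a₂)
    (h₁ : π ^ (4 * k) ∣ 2 * n₁ * a₂ + a₄)
    (h₁' : π ^ (6 * k) ∣ n₁ ^ 2 * a₂ + n₁ * a₄ + a₆ + n₁ ^ 3)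
    (h₂ : π ^ (4 * k) ∣ 2 * n₂ * a₂ + a₄)
    (h₂' : π ^ (6 * k) ∣ n₂ ^ 2 * a₂ + n₂ * a₄ + a₆ + n₂ ^ 3) :
    π ^ (2 * k) ∣ n₁ - n₂ :=
  stmt_11_general π hπ k a₂ a₄ a₆ n₁ n₂ ha h₁ h₁' h₂'
end

section
/- Assume p = 3. Let N be a nonnegative integer and a2, a4, a6 ∈ R_P with v_P(a2) = 1. Suppose n1 ∈ R_P satisfies v_P(2·n1·a2 + a4) ≥ ⌊(N+6)/2⌋ and v_P(n1³ + n1²·a2 + n1·a4 + a6) ≥ N + 4. Then an element n2 ∈ R_P satisfies v_P(2·n2·a2 + a4) ≥ ⌊(N+6)/2⌋ and v_P(n2³ + n2²·a2 + n2·a4 + a6) ≥ N + 4 if and only if v_P(n1 − n2) ≥ ⌊(N+4)/2⌋. -/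
/-!
Write `f = X³ + a₂X² + a₄X + a₆` and `k = ⌊(N+4)/2⌋`. In characteristic 3 the Taylor expansion
is `f(x + d) = f(x) + d f'(x) + d² a₂ + d³` with `f' = 2a₂X + a₄ = -(a₂X) + a₄`. Since
`v(a₂) = 1`, the condition `v(f'(n₁ + d)) ≥ k + 1` holds iff `v(d) ≥ k`, and then every term of
the Taylor expansion of `f(n₁ + d)` has valuation at least `N + 4`.
-/

section PrimeValuationOne

variable {M : Type*} [CommMonoidWithZero M] [IsCancelMulZero M] {π a x : M}

theorem Prime.pow_succ_dvd_mul_iff (hπ : Prime π) (ha : π ∣ a) (ha' : ¬ π ^ 2 ∣ a) (k : ℕ) :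
    π ^ (k + 1) ∣ a * x ↔ π ^ k ∣ x := by
  obtain ⟨u, rfl⟩ := ha
  have hu : ¬ π ∣ u := fun ⟨w, hw⟩ => ha' ⟨w, by rw [hw, sq, mul_assoc]⟩
  rw [pow_succ', mul_assoc, mul_dvd_mul_iff_left hπ.ne_zero]
  exact ⟨hπ.pow_dvd_of_dvd_mul_left k hu, fun h => h.mul_left u⟩

end PrimeValuationOne

section CharThree

variable {R : Type*} [CommRing R] [CharP R 3]

theorem two_eq_neg_one_of_charP_three : (2 : R) = -1 := by
  linear_combination CharP.cast_eq_zero R 3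

theorem cubic_add_eq_of_charP_three (a₂ a₄ a₆ x d : R) :
    (x + d) ^ 3 + (x + d) ^ 2 * a₂ + (x + d) * a₄ + a₆
      = (x ^ 3 + x ^ 2 * a₂ + x * a₄ + a₆) + d * (2 * x * a₂ + a₄) + d ^ 2 * a₂ + d ^ 3 := by
  linear_combination (x ^ 2 * d + x * d ^ 2) * CharP.cast_eq_zero R 3

theorem pow_succ_dvd_two_mul_add_mul_add_iff_of_charP_three [IsDomain R] {π : R} (hπ : Prime π) {a₂ : R}
    (ha : π ∣ a₂) (ha' : ¬ π ^ 2 ∣ a₂) {k : ℕ} {a₄ x : R}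
    (hx : π ^ (k + 1) ∣ 2 * x * a₂ + a₄) (d : R) :
    π ^ (k + 1) ∣ 2 * (x + d) * a₂ + a₄ ↔ π ^ k ∣ d := by
  have hsplit : 2 * (x + d) * a₂ + a₄ = (2 * x * a₂ + a₄) + -(a₂ * d) := by
    rw [two_eq_neg_one_of_charP_three]; ring
  rw [hsplit, dvd_add_right hx, dvd_neg, hπ.pow_succ_dvd_mul_iff ha ha']

theorem pow_dvd_cubic_add_of_charP_three {π a₂ a₄ a₆ x d : R} {k m : ℕ}
    (hm₂ : m ≤ 2 * k + 1) (hm₃ : m ≤ 3 * k) (ha : π ∣ a₂)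
    (hx' : π ^ (k + 1) ∣ 2 * x * a₂ + a₄) (hx : π ^ m ∣ x ^ 3 + x ^ 2 * a₂ + x * a₄ + a₆)
    (hd : π ^ k ∣ d) :
    π ^ m ∣ (x + d) ^ 3 + (x + d) ^ 2 * a₂ + (x + d) * a₄ + a₆ := by
  rw [cubic_add_eq_of_charP_three]
  have hlin : π ^ m ∣ d * (2 * x * a₂ + a₄) :=
    (pow_dvd_pow π (by omega)).trans (pow_add π k (k + 1) ▸ mul_dvd_mul hd hx')
  have hsq : π ^ m ∣ d ^ 2 * a₂ :=
    (pow_dvd_pow π hm₂).trans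
      (by rw [pow_succ, pow_mul']; exact mul_dvd_mul (pow_dvd_pow_of_dvd hd 2) ha)
  have hcube : π ^ m ∣ d ^ 3 :=
    (pow_dvd_pow π hm₃).trans (by rw [pow_mul']; exact pow_dvd_pow_of_dvd hd 3)
  exact ((hx.add hlin).add hsq).add hcube

end CharThree

/-- Assume `p = 3`. Let `N ≥ 0` and `a₂, a₄, a₆ ∈ R_P` with `v_P(a₂) = 1`.
Suppose `n₁ ∈ R_P` satisfies `v_P(2n₁a₂ + a₄) ≥ ⌊(N+6)/2⌋` and
`v_P(n₁³ + n₁²a₂ + n₁a₄ + a₆) ≥ N + 4`. Then `n₂ ∈ R_P` satisfies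
`v_P(2n₂a₂ + a₄) ≥ ⌊(N+6)/2⌋` and `v_P(n₂³ + n₂²a₂ + n₂a₄ + a₆) ≥ N + 4` if and only if
`v_P(n₁ − n₂) ≥ ⌊(N+4)/2⌋`. -/
theorem stmt_14 {R : Type*} [CommRing R] [IsDomain R] [IsDiscreteValuationRing R]
    [CharP R 3] (π : R) (hπ : Irreducible π) (N : ℕ)
    (a₂ a₄ a₆ n₁ n₂ : R)
    (ha : π ∣ a₂) (ha' : ¬ π ^ 2 ∣ a₂)
    (h₁ : π ^ ((N + 6) / 2) ∣ 2 * n₁ * a₂ + a₄)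
    (h₂ : π ^ (N + 4) ∣ n₁ ^ 3 + n₁ ^ 2 * a₂ + n₁ * a₄ + a₆) :
    (π ^ ((N + 6) / 2) ∣ 2 * n₂ * a₂ + a₄
        ∧ π ^ (N + 4) ∣ n₂ ^ 3 + n₂ ^ 2 * a₂ + n₂ * a₄ + a₆)
      ↔ π ^ ((N + 4) / 2) ∣ n₁ - n₂ := by
  obtain ⟨d, rfl⟩ : ∃ d, n₂ = n₁ + d := ⟨n₂ - n₁, by ring⟩
  rw [show (N + 6) / 2 = (N + 4) / 2 + 1 by omega] at h₁ ⊢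
  have hderiv := pow_succ_dvd_two_mul_add_mul_add_iff_of_charP_three hπ.prime ha ha' h₁ d
  rw [show n₁ - (n₁ + d) = -d by ring, dvd_neg]
  exact ⟨fun h => hderiv.mp h.1, fun hd =>
    ⟨hderiv.mpr hd, pow_dvd_cubic_add_of_charP_three (by omega) (by omega) ha h₁ h₂ hd⟩⟩
end
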